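/- Let xi ~ N(0, I_m), w(xi) := sum_{i=1}^m (xi_i^2-1)^2, and let M be a symmetric m-by-m real matrix. Then E[w(xi) * (xi^T M xi)^2] = (4m + 32) * tr(M^2) + (2m + 16) * (tr M)^2 + 24 * sum_{i=1}^m M_{ii}^2. -/

import Mathlib

/-!
Write `w(ξ) = ∑ₐ (ξₐ² - 1)²`. For each `a`, `(ξₐ² - 1)² dγ(ξ)` is twice a product probability
measure in which only the `a`-th factor is changed, to `(y² - 1)² / 2 · γ(dy)`; this factor is
still symmetric, with second and fourth moments `5` and `39` instead of `1` and `3`. For any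
product of symmetric probability measures on `ℝ` with second moments `sᵢ` and fourth moments
`kᵢ`, expanding `(ξᵀ M ξ)²` into degree-four monomials and using independence gives
`E[(ξᵀ M ξ)²] = (∑ Mᵢᵢ sᵢ)² + ∑ᵢⱼ Mᵢⱼ (Mᵢⱼ + Mⱼᵢ) sᵢ sⱼ + ∑ Mᵢᵢ² (kᵢ - 3 sᵢ²)`.
Summing over `a` gives the result. The Gaussian moments come from the recursion
`E[ξ^(n+2)] = (n+1) E[ξⁿ]`, which is integration by parts against `φ' = -x φ`.
-/

open MeasureTheory ProbabilityTheory Matrix Real Finset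

namespace ProbabilityTheory

lemma integrable_pow_gaussianReal (μ : ℝ) (v : NNReal) (n : ℕ) :
    Integrable (fun x => x ^ n) (gaussianReal μ v) :=
  integrable_pow_of_mem_interior_integrableExpSet (by simp) n

lemma integrable_gaussianPDFReal_mul_pow (n : ℕ) :
    Integrable fun x => gaussianPDFReal 0 1 x * x ^ n := by
  have h := integrable_pow_gaussianReal 0 1 n
  rw [gaussianReal_of_var_ne_zero _ one_ne_zero,
    integrable_withDensity_iff_integrable_smul' (measurable_gaussianPDF 0 1)
      (ae_of_all _ fun _ => gaussianPDF_lt_top)] at h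
  simpa [toReal_gaussianPDF] using h

lemma hasDerivAt_gaussianPDFReal_zero_one (x : ℝ) :
    HasDerivAt (gaussianPDFReal 0 1) (-x * gaussianPDFReal 0 1 x) x := by
  have hφ : gaussianPDFReal 0 1 = fun y => (√(2 * π))⁻¹ * rexp (-y ^ 2 / 2) := by
    ext y; simp [gaussianPDFReal_def]
  rw [hφ]
  refine ((((hasDerivAt_pow 2 x).fun_neg).div_const 2).exp.const_mul _).congr_deriv ?_
  push_cast
  ring

lemma integral_pow_add_two_gaussianReal (n : ℕ) :
    ∫ x, x ^ (n + 2) ∂gaussianReal 0 1 = (n + 1) * ∫ x, x ^ n ∂gaussianReal 0 1 := by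
  have hφ := integrable_gaussianPDFReal_mul_pow
  simp only [integral_gaussianReal_eq_integral_smul one_ne_zero, smul_eq_mul]
  have hparts := integral_mul_deriv_eq_deriv_mul_of_integrable
    (u := fun x : ℝ => x ^ (n + 1)) (v := fun x => -gaussianPDFReal 0 1 x)
    (u' := fun x => (n + 1) * x ^ n) (v' := fun x => x * gaussianPDFReal 0 1 x)
    (fun x _ => by simpa using hasDerivAt_pow (n + 1) x)
    (fun x _ => by simpa using (hasDerivAt_gaussianPDFReal_zero_one x).fun_neg)
    (by simpa [Pi.mul_def, pow_succ, mul_comm, mul_left_comm, mul_assoc] using hφ (n + 2))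
    (by convert (hφ n).const_mul (-(n + 1 : ℝ)) using 2; simp only [Pi.mul_apply]; ring)
    (by simpa [Pi.mul_def, mul_comm] using (hφ (n + 1)).neg)
  rw [← integral_const_mul]
  convert hparts using 1
  · congr 1; ext x; ring
  · rw [← integral_neg]; congr 1; ext x; ring

lemma sq_sub_one_sq_mul_pow_eq (n : ℕ) :
    (fun y : ℝ => (y ^ 2 - 1) ^ 2 * y ^ n) = fun y => y ^ (n + 4) - 2 * y ^ (n + 2) + y ^ n := by
  ext y; ring

lemma integrable_sq_sub_one_sq_mul_pow_gaussianReal (n : ℕ) :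
    Integrable (fun y => (y ^ 2 - 1) ^ 2 * y ^ n) (gaussianReal 0 1) := by
  have hint := integrable_pow_gaussianReal 0 1
  rw [sq_sub_one_sq_mul_pow_eq]
  exact ((hint _).sub ((hint _).const_mul 2)).add (hint n)

lemma integral_sq_sub_one_sq_mul_pow_gaussianReal (n : ℕ) :
    ∫ y, (y ^ 2 - 1) ^ 2 * y ^ n ∂gaussianReal 0 1
      = ∫ y, y ^ (n + 4) ∂gaussianReal 0 1 - 2 * ∫ y, y ^ (n + 2) ∂gaussianReal 0 1
        + ∫ y, y ^ n ∂gaussianReal 0 1 := by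
  have hint := integrable_pow_gaussianReal 0 1
  have hsub : Integrable (fun y : ℝ => y ^ (n + 4) - 2 * y ^ (n + 2)) (gaussianReal 0 1) :=
    (hint _).sub ((hint _).const_mul 2)
  rw [sq_sub_one_sq_mul_pow_eq, integral_add hsub (hint n),
    integral_sub (hint _) ((hint _).const_mul 2), integral_const_mul]

end ProbabilityTheory

section QuadraticForm

variable {ι : Type*} [Fintype ι]

lemma dotProduct_mulVec_sq (M : Matrix ι ι ℝ) (x : ι → ℝ) :
    (x ⬝ᵥ M *ᵥ x) ^ 2 = ∑ p : ι × ι, ∑ q : ι × ι,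
      M p.1 p.2 * M q.1 q.2 * (({p.1, p.2, q.1, q.2} : Multiset ι).map x).prod := by
  have hQ : x ⬝ᵥ M *ᵥ x = ∑ p : ι × ι, M p.1 p.2 * (x p.1 * x p.2) := by
    simp only [dotProduct, mulVec, Fintype.sum_prod_type, mul_sum]
    exact sum_congr rfl fun i _ => sum_congr rfl fun j _ => by ring
  rw [sq, hQ, sum_mul_sum]
  exact sum_congr rfl fun p _ => sum_congr rfl fun q _ => by
    simp only [Multiset.insert_eq_cons, Multiset.map_cons, Multiset.map_singleton,
      Multiset.prod_cons, Multiset.prod_singleton]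
    ring

/-- `E[(xᵀ M x)²]` for independent symmetric coordinates with second moments `s` and fourth
moments `k`. -/
def quadFormSecondMoment (M : Matrix ι ι ℝ) (s k : ι → ℝ) : ℝ :=
  (∑ i, M i i * s i) ^ 2 + ∑ i, ∑ j, M i j * (M i j + M j i) * s i * s j
    + ∑ i, M i i ^ 2 * (k i - 3 * s i ^ 2)

variable [DecidableEq ι]

lemma prod_apply_count_eq_prod_toFinset (c : ι → ℕ → ℝ) (h0 : ∀ t, c t 0 = 1)
    (s : Multiset ι) :
    ∏ t, c t (s.count t) = ∏ t ∈ s.toFinset, c t (s.count t) :=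
  (prod_subset (subset_univ _) fun t _ ht => by
    rw [Multiset.count_eq_zero_of_notMem (by simpa using ht), h0]).symm

/-- A block of odd size in the partition of `{i, j, k, l}` by equality kills the product. -/
lemma prod_apply_count_four (c : ι → ℕ → ℝ) (h0 : ∀ t, c t 0 = 1) (h1 : ∀ t, c t 1 = 0)
    (h3 : ∀ t, c t 3 = 0) (i j k l : ι) :
    ∏ t, c t (Multiset.count t {i, j, k, l}) =
      (if i = j ∧ k = l then c i 2 * c k 2 else 0) + (if i = k ∧ j = l then c i 2 * c j 2 else 0)
      + (if i = l ∧ j = k then c i 2 * c j 2 else 0)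
      + (if i = j ∧ j = k ∧ k = l then c i 4 - 3 * c i 2 ^ 2 else 0) := by
  rw [prod_apply_count_eq_prod_toFinset c h0]
  by_cases hij : i = j <;> by_cases hik : i = k <;> by_cases hil : i = l <;>
    by_cases hjk : j = k <;> by_cases hjl : j = l <;> by_cases hkl : k = l <;>
    subst_vars <;> simp_all [Multiset.count_cons, eq_comm] <;> ring

lemma sum_sum_mul_prod_apply_count_four (c : ι → ℕ → ℝ) (h0 : ∀ t, c t 0 = 1)
    (h1 : ∀ t, c t 1 = 0) (h3 : ∀ t, c t 3 = 0) (M : Matrix ι ι ℝ) :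
    ∑ p : ι × ι, ∑ q : ι × ι,
        M p.1 p.2 * M q.1 q.2 * ∏ t, c t (Multiset.count t {p.1, p.2, q.1, q.2})
      = quadFormSecondMoment M (c · 2) (c · 4) := by
  simp only [quadFormSecondMoment, Fintype.sum_prod_type, prod_apply_count_four c h0 h1 h3]
  simp only [ite_and, sq, mul_add, mul_ite, mul_zero, sum_add_distrib, sum_ite_irrel, sum_ite_eq,
    mem_univ, ↓reduceIte, sum_const_zero, sum_mul_sum, add_mul, add_left_inj]
  simp only [mul_comm, mul_left_comm]
  ac_rfl

end QuadraticForm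

noncomputable def weightedMoment {ι : Type*} (μ : ι → Measure ℝ) (g : ι → ℝ → ℝ) (t : ι) (n : ℕ) :
    ℝ :=
  ∫ y, g t y * y ^ n ∂μ t

section ProductMeasure

variable {ι : Type*} [Fintype ι] [DecidableEq ι]

lemma prod_mul_prod_map_eq_prod (g : ι → ℝ → ℝ) (s : Multiset ι) (x : ι → ℝ) :
    (∏ t, g t (x t)) * (s.map x).prod = ∏ t, g t (x t) * x t ^ s.count t := by
  rw [prod_mul_distrib, prod_multiset_map_count]
  congr 1
  exact prod_subset (subset_univ _) fun t _ ht => by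
    rw [Multiset.count_eq_zero_of_notMem (by simpa using ht), pow_zero]

variable {μ : ι → Measure ℝ} [∀ t, SigmaFinite (μ t)]

lemma integral_prod_mul_prod_map (g : ι → ℝ → ℝ) (s : Multiset ι) :
    ∫ x, (∏ t, g t (x t)) * (s.map x).prod ∂Measure.pi μ
      = ∏ t, ∫ y, g t y * y ^ s.count t ∂μ t := by
  simp_rw [prod_mul_prod_map_eq_prod]
  exact integral_fintype_prod_eq_prod (fun t y => g t y * y ^ s.count t)

lemma integrable_prod_mul_prod_map (g : ι → ℝ → ℝ) {s : Multiset ι} (hs : s.card = 4)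
    (hint : ∀ t, ∀ n ≤ 4, Integrable (fun y => g t y * y ^ n) (μ t)) :
    Integrable (fun x => (∏ t, g t (x t)) * (s.map x).prod) (Measure.pi μ) := by
  simp_rw [prod_mul_prod_map_eq_prod]
  exact Integrable.fintype_prod fun t => hint t _ (hs ▸ Multiset.count_le_card t s)

lemma integrable_prod_mul_dotProduct_mulVec_sq (g : ι → ℝ → ℝ)
    (hint : ∀ t, ∀ n ≤ 4, Integrable (fun y => g t y * y ^ n) (μ t)) (M : Matrix ι ι ℝ) :
    Integrable (fun x => (∏ t, g t (x t)) * (x ⬝ᵥ M *ᵥ x) ^ 2) (Measure.pi μ) := by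
  simp_rw [dotProduct_mulVec_sq, mul_sum, mul_left_comm _ (M _ _ * M _ _)]
  exact integrable_finsetSum _ fun p _ => integrable_finsetSum _ fun q _ =>
    (integrable_prod_mul_prod_map g rfl hint).const_mul _

theorem integral_prod_mul_dotProduct_mulVec_sq (g : ι → ℝ → ℝ)
    (hint : ∀ t, ∀ n ≤ 4, Integrable (fun y => g t y * y ^ n) (μ t)) (M : Matrix ι ι ℝ)
    (h0 : ∀ t, weightedMoment μ g t 0 = 1) (h1 : ∀ t, weightedMoment μ g t 1 = 0)
    (h3 : ∀ t, weightedMoment μ g t 3 = 0) :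
    ∫ x, (∏ t, g t (x t)) * (x ⬝ᵥ M *ᵥ x) ^ 2 ∂Measure.pi μ
      = quadFormSecondMoment M (weightedMoment μ g · 2) (weightedMoment μ g · 4) := by
  rw [← sum_sum_mul_prod_apply_count_four _ h0 h1 h3]
  simp_rw [dotProduct_mulVec_sq, mul_sum, mul_left_comm _ (M _ _ * M _ _)]
  have hterm := fun (p q : ι × ι) =>
    (integrable_prod_mul_prod_map g (s := {p.1, p.2, q.1, q.2}) rfl hint).const_mul
      (M p.1 p.2 * M q.1 q.2)
  rw [integral_finsetSum _ fun p _ => integrable_finsetSum _ fun q _ => hterm p q]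
  refine sum_congr rfl fun p _ => ?_
  rw [integral_finsetSum _ fun q _ => hterm p q]
  refine sum_congr rfl fun q _ => ?_
  rw [integral_const_mul, integral_prod_mul_prod_map]
  rfl

end ProductMeasure

section HermiteWeight

variable {ι : Type*} [DecidableEq ι]

/-- `y² - 1` is the Hermite polynomial `He₂`; the factor `1 / 2` makes `(y² - 1)² / 2` a
probability density against the standard Gaussian, since `E[(ξ² - 1)²] = 2`. -/
noncomputable def hermiteTwoWeight (a t : ι) (y : ℝ) : ℝ :=
  if t = a then (y ^ 2 - 1) ^ 2 / 2 else 1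

lemma two_mul_prod_hermiteTwoWeight [Fintype ι] (a : ι) (x : ι → ℝ) :
    2 * ∏ t, hermiteTwoWeight a t (x t) = (x a ^ 2 - 1) ^ 2 := by
  simp only [hermiteTwoWeight, prod_ite_eq', mem_univ, ↓reduceIte]
  ring

lemma hermiteTwoWeight_mul_pow (a t : ι) (n : ℕ) (y : ℝ) :
    hermiteTwoWeight a t y * y ^ n = if t = a then (y ^ 2 - 1) ^ 2 * y ^ n / 2 else y ^ n := by
  unfold hermiteTwoWeight; split_ifs <;> ring

lemma integrable_hermiteTwoWeight_mul_pow (a t : ι) (n : ℕ) :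
    Integrable (fun y => hermiteTwoWeight a t y * y ^ n) (gaussianReal 0 1) := by
  simp_rw [hermiteTwoWeight_mul_pow]
  split_ifs
  · exact (integrable_sq_sub_one_sq_mul_pow_gaussianReal n).div_const 2
  · exact integrable_pow_gaussianReal 0 1 n

lemma weightedMoment_hermiteTwoWeight (a t : ι) (n : ℕ) :
    weightedMoment (fun _ => gaussianReal 0 1) (hermiteTwoWeight a) t n
      = if t = a then (∫ y, y ^ (n + 4) ∂gaussianReal 0 1
          - 2 * ∫ y, y ^ (n + 2) ∂gaussianReal 0 1 + ∫ y, y ^ n ∂gaussianReal 0 1) / 2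
        else ∫ y, y ^ n ∂gaussianReal 0 1 := by
  simp_rw [weightedMoment, hermiteTwoWeight_mul_pow]
  split_ifs
  · rw [integral_div, integral_sq_sub_one_sq_mul_pow_gaussianReal]
  · rfl

section MomentValues

variable (a t : ι)

lemma weightedMoment_hermiteTwoWeight_zero :
    weightedMoment (fun _ => gaussianReal 0 1) (hermiteTwoWeight a) t 0 = 1 := by
  rw [weightedMoment_hermiteTwoWeight]; norm_num [integral_pow_add_two_gaussianReal]

lemma weightedMoment_hermiteTwoWeight_one :
    weightedMoment (fun _ => gaussianReal 0 1) (hermiteTwoWeight a) t 1 = 0 := by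
  rw [weightedMoment_hermiteTwoWeight]
  norm_num [integral_pow_add_two_gaussianReal, integral_id_gaussianReal]

lemma weightedMoment_hermiteTwoWeight_two :
    weightedMoment (fun _ => gaussianReal 0 1) (hermiteTwoWeight a) t 2
      = if t = a then 5 else 1 := by
  rw [weightedMoment_hermiteTwoWeight]; norm_num [integral_pow_add_two_gaussianReal]

lemma weightedMoment_hermiteTwoWeight_three :
    weightedMoment (fun _ => gaussianReal 0 1) (hermiteTwoWeight a) t 3 = 0 := by
  rw [weightedMoment_hermiteTwoWeight]
  norm_num [integral_pow_add_two_gaussianReal, integral_id_gaussianReal]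

lemma weightedMoment_hermiteTwoWeight_four :
    weightedMoment (fun _ => gaussianReal 0 1) (hermiteTwoWeight a) t 4
      = if t = a then 39 else 3 := by
  rw [weightedMoment_hermiteTwoWeight]; norm_num [integral_pow_add_two_gaussianReal]

end MomentValues

lemma sum_two_mul_quadFormSecondMoment_hermiteTwo [Fintype ι] (M : Matrix ι ι ℝ) (hM : M.IsSymm) :
    ∑ a, 2 * quadFormSecondMoment M (fun i => if i = a then 5 else 1)
        (fun i => if i = a then 39 else 3)
      = (4 * (Fintype.card ι : ℝ) + 32) * (M * M).trace
        + (2 * (Fintype.card ι : ℝ) + 16) * M.trace ^ 2 + 24 * ∑ i, M i i ^ 2 := by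
  have hs : ∀ i a : ι, (if i = a then (5 : ℝ) else 1) = 1 + if i = a then 4 else 0 := by
    intro i a; split_ifs <;> norm_num
  have hsym : ∀ i j, M j i = M i j := fun i j => hM.apply i j
  have htrace : ∀ a, ∑ i, M i i * (if i = a then 5 else 1) = M.trace + 4 * M a a := by
    intro a
    simp only [hs, mul_add, mul_one, mul_ite, mul_zero, sum_add_distrib, sum_ite_eq', mem_univ,
      ↓reduceIte, trace, diag_apply, add_right_inj]
    ring
  have hfrob : ∀ a, ∑ i, ∑ j, M i j * (M i j + M j i) * (if i = a then 5 else 1)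
        * (if j = a then 5 else 1)
      = 2 * (M * M).trace + 16 * ∑ j, M a j ^ 2 + 32 * M a a ^ 2 := by
    intro a
    simp only [hsym, ← two_mul, hs, mul_add, mul_one, mul_ite, mul_zero, add_mul, ite_mul, zero_mul,
      sum_add_distrib, sum_ite_irrel, sum_const_zero, sum_ite_eq', mem_univ, ↓reduceIte, trace,
      diag_apply, mul_apply]
    simp only [sq, mul_left_comm _ (2 : ℝ), ← mul_sum, ← sum_mul]
    ring
  have hdiag : ∀ a, ∑ i, M i i ^ 2 * ((if i = a then 39 else 3) - 3 * (if i = a then 5 else 1) ^ 2)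
      = -36 * M a a ^ 2 := by
    intro a
    rw [sum_eq_single a (fun i _ hi => by simp [hi]) (by simp)]
    norm_num; ring
  have hT : ∑ i, M i i = M.trace := rfl
  have hF : ∑ i, ∑ j, M i j ^ 2 = (M * M).trace := by
    simp [trace, mul_apply, hsym, sq]
  simp only [quadFormSecondMoment, htrace, hfrob, hdiag]
  simp only [add_sq, mul_add, sum_add_distrib, ← mul_sum, sum_const, card_univ, nsmul_eq_mul,
    mul_pow, hT, hF]
  ring

end HermiteWeight

theorem stmt_5 (m : ℕ) (M : Matrix (Fin m) (Fin m) ℝ) (hM : M.IsSymm) :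
    (∫ ξ : Fin m → ℝ,
        (∑ i, (ξ i ^ 2 - 1) ^ 2 : ℝ) * (ξ ⬝ᵥ M.mulVec ξ) ^ 2
        ∂(Measure.pi fun _ : Fin m => gaussianReal 0 1))
      = (4 * (m : ℝ) + 32) * (M * M).trace
        + (2 * (m : ℝ) + 16) * M.trace ^ 2
        + 24 * ∑ i, (M i i) ^ 2 := by
  have hint a := integrable_prod_mul_dotProduct_mulVec_sq (hermiteTwoWeight a)
    (fun t n _ => integrable_hermiteTwoWeight_mul_pow a t n) M
  have hsplit : ∀ ξ : Fin m → ℝ, (∑ i, (ξ i ^ 2 - 1) ^ 2) * (ξ ⬝ᵥ M *ᵥ ξ) ^ 2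
      = ∑ a, 2 * ((∏ t, hermiteTwoWeight a t (ξ t)) * (ξ ⬝ᵥ M *ᵥ ξ) ^ 2) := fun ξ => by
    simp only [sum_mul, ← two_mul_prod_hermiteTwoWeight, mul_assoc]
  simp_rw [hsplit]
  rw [integral_finsetSum _ fun a _ => (hint a).const_mul 2]
  simp_rw [integral_const_mul]
  have hsum := sum_two_mul_quadFormSecondMoment_hermiteTwo M hM
  rw [Fintype.card_fin] at hsum
  rw [← hsum]
  refine sum_congr rfl fun a _ => ?_
  rw [integral_prod_mul_dotProduct_mulVec_sq _
    (fun t n _ => integrable_hermiteTwoWeight_mul_pow a t n) M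
    (weightedMoment_hermiteTwoWeight_zero a) (weightedMoment_hermiteTwoWeight_one a)
    (weightedMoment_hermiteTwoWeight_three a)]
  simp only [weightedMoment_hermiteTwoWeight_two, weightedMoment_hermiteTwoWeight_four]
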